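/- Let G^{(1)},...,G^{(L)} ∈ ℝ^{d×d} be symmetric matrices and suppose each G^{(l)} has a diagonal block (indexed by a set S_{s(l)} depending on its label) whose smallest singular value is at least σ > 0, while all other blocks vanish. Then the smallest singular value of the mode-1 matricization of the tensor with slices G^{(l)} satisfies σ_min²(M₁(G)) = λ_min(Σ_l G^{(l)}(G^{(l)})ᵀ) ≥ L_min·σ², where L_min is the minimal number of layers per label, provided each label's block position is occupied by at least L_min layers covering all coordinates. -/

import Mathlib

open Matrix

/-- Euclidean norm of a finitely supported real vector. -/
noncomputable def vecEnorm {α : Type*} [Fintype α] (x : α → ℝ) : ℝ :=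
  Real.sqrt (∑ i, x i ^ 2)

/-!
Since every slice is symmetric, `vᵀ (∑ₗ G⁽ˡ⁾ G⁽ˡ⁾ᵀ) v = ∑ₗ ‖G⁽ˡ⁾ v‖²`, and `G⁽ˡ⁾ v` only sees the
restriction of `v` to the block `S_{s(l)}`, where `G⁽ˡ⁾` is bounded below by `σ`. Summing over the
layers, each coordinate of `v` is counted once per layer carrying its label, so at least `L_min`
times; this bounds the Rayleigh quotient, hence every eigenvalue, from below by `L_min σ²`.
-/

open Finset

namespace Matrix

variable {R n m ι : Type*} [Fintype m] [Fintype ι]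

theorem mul_transpose_self_eq_sum_of_apply_eq [NonUnitalNonAssocSemiring R]
    {A : Matrix n (m × ι) R} {G : ι → Matrix n m R} (hA : ∀ i j l, A i (j, l) = G l i j) :
    A * Aᵀ = ∑ l, G l * (G l)ᵀ := by
  ext i k
  simp only [mul_apply, sum_apply, transpose_apply, Fintype.sum_prod_type, hA]
  exact Finset.sum_comm

theorem dotProduct_sum_mul_transpose_mulVec [Fintype n] [NonUnitalCommSemiring R]
    (G : ι → Matrix n m R) (v : n → R) :
    v ⬝ᵥ (∑ l, G l * (G l)ᵀ) *ᵥ v = ∑ l, (G l)ᵀ *ᵥ v ⬝ᵥ (G l)ᵀ *ᵥ v := by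
  rw [sum_mulVec, dotProduct_sum]
  refine Finset.sum_congr rfl fun l _ => ?_
  rw [← mulVec_mulVec, dotProduct_mulVec, ← mulVec_transpose]

theorem mulVec_indicator_of_apply_eq_zero [NonUnitalNonAssocSemiring R] {G : Matrix n m R}
    {t : Set m} (hG : ∀ i j, j ∉ t → G i j = 0) (v : m → R) :
    G *ᵥ t.indicator v = G *ᵥ v := by
  ext i
  refine Finset.sum_congr rfl fun j _ => ?_
  by_cases hj : j ∈ t
  · rw [Set.indicator_of_mem hj]
  · simp only [hG i j hj, zero_mul]

theorem IsHermitian.le_eigenvalues_of_le_dotProduct_mulVec [Fintype n]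
    [DecidableEq n] {A : Matrix n n ℝ} (hA : A.IsHermitian) {c : ℝ}
    (h : ∀ v : n → ℝ, c * (v ⬝ᵥ v) ≤ v ⬝ᵥ A *ᵥ v) (i : n) :
    c ≤ hA.eigenvalues i := by
  set v : n → ℝ := ⇑(hA.eigenvectorBasis i)
  have hv : 0 < v ⬝ᵥ v := by
    have := dotProduct_star_self_pos_iff.mpr
      fun h => hA.eigenvectorBasis.orthonormal.ne_zero i ((WithLp.ofLp_eq_zero _).mp h)
    simpa only [star_trivial] using this
  have hAv : v ⬝ᵥ A *ᵥ v = hA.eigenvalues i * (v ⬝ᵥ v) := by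
    rw [hA.mulVec_eigenvectorBasis, dotProduct_smul, smul_eq_mul]
  exact le_of_mul_le_mul_right (hAv ▸ h v) hv

end Matrix

theorem vecEnorm_sq {α : Type*} [Fintype α] (x : α → ℝ) : vecEnorm x ^ 2 = x ⬝ᵥ x := by
  rw [vecEnorm, Real.sq_sqrt (Finset.sum_nonneg fun i _ => sq_nonneg (x i))]
  simp only [dotProduct, sq]

theorem sq_mul_dotProduct_self_le_of_mul_vecEnorm_le {α β : Type*} [Fintype α] [Fintype β]
    {σ : ℝ} (hσ : 0 ≤ σ) {x : α → ℝ} {y : β → ℝ} (h : σ * vecEnorm x ≤ vecEnorm y) :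
    σ ^ 2 * (x ⬝ᵥ x) ≤ y ⬝ᵥ y := by
  have := pow_le_pow_left₀ (a := σ * vecEnorm x) (mul_nonneg hσ (Real.sqrt_nonneg _)) h 2
  rwa [mul_pow, vecEnorm_sq, vecEnorm_sq] at this

theorem sum_dotProduct_self_indicator_eq {n ι κ : Type*} [Fintype n] [Fintype ι]
    [DecidableEq κ] (S : n → κ) (s : ι → κ) (v : n → ℝ) :
    ∑ l, {j | S j = s l}.indicator v ⬝ᵥ {j | S j = s l}.indicator v =
      ∑ j, (#{l | s l = S j} : ℝ) * (v j * v j) := by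
  simp only [dotProduct, Set.indicator_apply, Set.mem_ofPred_eq]
  rw [Finset.sum_comm]
  refine Finset.sum_congr rfl fun j _ => ?_
  rw [Finset.natCast_card_filter, Finset.sum_mul]
  refine Finset.sum_congr rfl fun l _ => ?_
  by_cases h : S j = s l <;> simp [h, eq_comm]

theorem natCast_mul_dotProduct_self_le_sum_indicator {n ι κ : Type*} [Fintype n] [Fintype ι]
    [DecidableEq κ] {S : n → κ} {s : ι → κ} {k : ℕ} (hk : ∀ m, k ≤ #{l | s l = m})
    (v : n → ℝ) :
    k * (v ⬝ᵥ v) ≤ ∑ l, {j | S j = s l}.indicator v ⬝ᵥ {j | S j = s l}.indicator v := by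
  rw [sum_dotProduct_self_indicator_eq, dotProduct, Finset.mul_sum]
  exact Finset.sum_le_sum fun j _ =>
    mul_le_mul_of_nonneg_right (Nat.cast_le.mpr (hk (S j))) (mul_self_nonneg (v j))

theorem stmt_7_general (d L M : ℕ)
    (G : Fin L → Matrix (Fin d) (Fin d) ℝ)
    (hsym : ∀ l, (G l).IsSymm)
    (S : Fin d → Fin M) (s : Fin L → Fin M)
    (σ : ℝ) (hσ : 0 < σ)
    (hsupp : ∀ l i j, (S i ≠ s l ∨ S j ≠ s l) → G l i j = 0)
    (hblock : ∀ l (x : Fin d → ℝ), (∀ i, S i ≠ s l → x i = 0) →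
      σ * vecEnorm x ≤ vecEnorm ((G l).mulVec x))
    (Lmin : ℕ)
    (hLmin : ∀ m : Fin M, Lmin ≤ (Finset.univ.filter fun l => s l = m).card)
    (M1 : Matrix (Fin d) (Fin d × Fin L) ℝ)
    (hM1 : ∀ i j l, M1 i (j, l) = G l i j)
    (hH : (∑ l, G l * (G l)ᵀ).IsHermitian) :
    M1 * M1ᵀ = ∑ l, G l * (G l)ᵀ ∧
    ∀ i, (Lmin : ℝ) * σ ^ 2 ≤ hH.eigenvalues i := by
  refine ⟨mul_transpose_self_eq_sum_of_apply_eq hM1,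
    hH.le_eigenvalues_of_le_dotProduct_mulVec fun v => ?_⟩
  set x : Fin L → Fin d → ℝ := fun l => {j | S j = s l}.indicator v
  have hx : ∀ l, σ ^ 2 * (x l ⬝ᵥ x l) ≤ G l *ᵥ v ⬝ᵥ G l *ᵥ v := fun l => by
    have hGx : G l *ᵥ x l = G l *ᵥ v :=
      mulVec_indicator_of_apply_eq_zero (fun i j hj => hsupp l i j (Or.inr hj)) v
    refine hGx ▸ sq_mul_dotProduct_self_le_of_mul_vecEnorm_le hσ.le (hblock l _ fun i hi => ?_)
    exact Set.indicator_of_notMem (show i ∉ {j | S j = s l} from hi) v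
  calc (Lmin : ℝ) * σ ^ 2 * (v ⬝ᵥ v) = σ ^ 2 * (Lmin * (v ⬝ᵥ v)) := by ring
    _ ≤ σ ^ 2 * ∑ l, x l ⬝ᵥ x l := by
      gcongr; exact natCast_mul_dotProduct_self_le_sum_indicator hLmin v
    _ = ∑ l, σ ^ 2 * (x l ⬝ᵥ x l) := Finset.mul_sum _ _ _
    _ ≤ ∑ l, G l *ᵥ v ⬝ᵥ G l *ᵥ v := Finset.sum_le_sum fun l _ => hx l
    _ = v ⬝ᵥ (∑ l, G l * (G l)ᵀ) *ᵥ v := by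
      rw [dotProduct_sum_mul_transpose_mulVec]
      simp only [(hsym _).eq]

theorem stmt_7 (d L M : ℕ)
    (G : Fin L → Matrix (Fin d) (Fin d) ℝ)
    (hsym : ∀ l, (G l).IsSymm)
    (S : Fin d → Fin M) (s : Fin L → Fin M)
    (σ : ℝ) (hσ : 0 < σ)
    (hsupp : ∀ l i j, (S i ≠ s l ∨ S j ≠ s l) → G l i j = 0)
    (hblock : ∀ l (x : Fin d → ℝ), (∀ i, S i ≠ s l → x i = 0) →
      σ * vecEnorm x ≤ vecEnorm ((G l).mulVec x))
    (Lmin : ℕ)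
    (hLmin : ∀ m : Fin M, Lmin ≤ (Finset.univ.filter fun l => s l = m).card)
    (hcover : ∀ i : Fin d, ∃ l, s l = S i)
    (M1 : Matrix (Fin d) (Fin d × Fin L) ℝ)
    (hM1 : ∀ i j l, M1 i (j, l) = G l i j)
    (hH : (∑ l, G l * (G l)ᵀ).IsHermitian) :
    M1 * M1ᵀ = ∑ l, G l * (G l)ᵀ ∧
    ∀ i, (Lmin : ℝ) * σ ^ 2 ≤ hH.eigenvalues i :=
  stmt_7_general d L M G hsym S s σ hσ hsupp hblock Lmin hLmin M1 hM1 hH
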